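/- arXiv:2311.11559 — 2 statements merged into one kernel-verified Lean document; each statement's English description precedes it below -/
import Mathlib

section
/- For any C¹ function u on ℝ^m × ℝ^k and (z,σ) ≠ 0 one has ⟨∇_α u, ∇_α ρ_α⟩ = (Z_α u / ρ_α) ψ_α, where ψ_α = |z|^{2α}/ρ_α^{2α}, Z_α u = ⟨z, ∇_z u⟩ + (α+1)⟨σ, ∇_σ u⟩, and ⟨∇_α u, ∇_α v⟩ = ⟨∇_z u, ∇_z v⟩ + (|z|^{2α}/4)⟨∇_σ u, ∇_σ v⟩. -/
open MeasureTheory Real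

noncomputable section

/-- The product space `ℝ^m × ℝ^k`. -/
abbrev E (m k : ℕ) := EuclideanSpace ℝ (Fin m) × EuclideanSpace ℝ (Fin k)

/-- The Baouendi–Grushin pseudo-gauge `ρ_α`. -/
def rho (m k : ℕ) (α : ℝ) (x : E m k) : ℝ :=
  (‖x.1‖ ^ (2 * (α + 1)) + 4 * (α + 1) ^ 2 * ‖x.2‖ ^ 2) ^ (1 / (2 * (α + 1)))

/-- The anisotropic dilations `δ_λ(z,σ) = (λ z, λ^{α+1} σ)`. -/
def dil (m k : ℕ) (α lam : ℝ) (x : E m k) : E m k :=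
  (lam • x.1, (lam ^ (α + 1)) • x.2)

/-- Standard basis vector in the `z`-slot. -/
def ez (m k : ℕ) (i : Fin m) : E m k := (EuclideanSpace.single i 1, 0)

/-- Standard basis vector in the `σ`-slot. -/
def es (m k : ℕ) (j : Fin k) : E m k := (0, EuclideanSpace.single j 1)

/-- The generator `Z_α u = ⟨z, ∇_z u⟩ + (α+1)⟨σ, ∇_σ u⟩`. -/
def Zop (m k : ℕ) (α : ℝ) (u : E m k → ℝ) (x : E m k) : ℝ :=
  fderiv ℝ u x (x.1, (α + 1) • x.2)

/-- `ψ_α = |z|^{2α} / ρ_α^{2α}`. -/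
def psi (m k : ℕ) (α : ℝ) (x : E m k) : ℝ :=
  ‖x.1‖ ^ (2 * α) / rho m k α x ^ (2 * α)

/-- `|∇_z u|²`. -/
def zGradSq (m k : ℕ) (u : E m k → ℝ) (x : E m k) : ℝ :=
  ∑ i : Fin m, (fderiv ℝ u x (ez m k i)) ^ 2

/-- `|∇_σ u|²`. -/
def sGradSq (m k : ℕ) (u : E m k → ℝ) (x : E m k) : ℝ :=
  ∑ j : Fin k, (fderiv ℝ u x (es m k j)) ^ 2

/-- `|∇_α u|² = |∇_z u|² + (|z|^{2α}/4)|∇_σ u|²`. -/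
def alphaGradSq (m k : ℕ) (α : ℝ) (u : E m k → ℝ) (x : E m k) : ℝ :=
  zGradSq m k u x + ‖x.1‖ ^ (2 * α) / 4 * sGradSq m k u x

/-- `⟨∇_α u, ∇_α v⟩ = ⟨∇_z u, ∇_z v⟩ + (|z|^{2α}/4)⟨∇_σ u, ∇_σ v⟩`. -/
def alphaInner (m k : ℕ) (α : ℝ) (u v : E m k → ℝ) (x : E m k) : ℝ :=
  (∑ i : Fin m, fderiv ℝ u x (ez m k i) * fderiv ℝ v x (ez m k i)) +
    ‖x.1‖ ^ (2 * α) / 4 *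
      ∑ j : Fin k, fderiv ℝ u x (es m k j) * fderiv ℝ v x (es m k j)

/-- The Laplacian in the `z`-variables, `Δ_z u`. -/
def lapZ (m k : ℕ) (u : E m k → ℝ) (x : E m k) : ℝ :=
  ∑ i : Fin m, fderiv ℝ (fun y => fderiv ℝ u y (ez m k i)) x (ez m k i)

/-- The Laplacian in the `σ`-variables, `Δ_σ u`. -/
def lapS (m k : ℕ) (u : E m k → ℝ) (x : E m k) : ℝ :=
  ∑ j : Fin k, fderiv ℝ (fun y => fderiv ℝ u y (es m k j)) x (es m k j)

/-- The Baouendi–Grushin operator `B_α u = Δ_z u + (|z|^{2α}/4) Δ_σ u`. -/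
def Bop (m k : ℕ) (α : ℝ) (u : E m k → ℝ) (x : E m k) : ℝ :=
  lapZ m k u x + ‖x.1‖ ^ (2 * α) / 4 * lapS m k u x

/-- The divergence of a vector field on `ℝ^m × ℝ^k`. -/
def divg (m k : ℕ) (V : E m k → E m k) (x : E m k) : ℝ :=
  (∑ i : Fin m, fderiv ℝ (fun y => (V y).1 i) x (ez m k i)) +
    ∑ j : Fin k, fderiv ℝ (fun y => (V y).2 j) x (es m k j)

end

/-! Away from the origin, differentiating `ρ_α ^ (2(α+1)) = |z| ^ (2(α+1)) + 4(α+1)²|σ|²` gives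
`∇_z ρ_α = |z|^{2α} z / ρ_α^{2α+1}` and `∇_σ ρ_α = 4(α+1) σ / ρ_α^{2α+1}`. In `⟨∇_α u, ∇_α ρ_α⟩`
the weight `|z|^{2α}/4` of the `σ`-part then produces the same factor `|z|^{2α}` as the `z`-part,
leaving `|z|^{2α} Z_α u / ρ_α^{2α+1}`. -/

section

variable {m k : ℕ} {α : ℝ}

lemma rho_rpow (hα : 0 < α + 1) (x : E m k) :
    rho m k α x ^ (2 * (α + 1)) = ‖x.1‖ ^ (2 * (α + 1)) + 4 * (α + 1) ^ 2 * ‖x.2‖ ^ 2 := by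
  rw [rho, one_div, Real.rpow_inv_rpow (by positivity) (by positivity)]

lemma rho_pos (hα : 0 < α + 1) {x : E m k} (hx : x ≠ 0) : 0 < rho m k α x := by
  have hx' : x.1 ≠ 0 ∨ x.2 ≠ 0 := by
    contrapose! hx
    exact Prod.ext hx.1 hx.2
  refine Real.rpow_pos_of_pos ?_ _
  rcases hx' with h | h
  · have := Real.rpow_pos_of_pos (norm_pos_iff.2 h) (2 * (α + 1))
    positivity
  · have := norm_pos_iff.2 h
    positivity

lemma hasFDerivAt_rho (hα : -1 / 2 < α) {x : E m k} (hx : x ≠ 0) :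
    HasFDerivAt (rho m k α)
      ((rho m k α x ^ (2 * α + 1))⁻¹ •
        (‖x.1‖ ^ (2 * α) • (innerSL ℝ x.1).comp (ContinuousLinearMap.fst ℝ _ _) +
          (4 * (α + 1)) • (innerSL ℝ x.2).comp (ContinuousLinearMap.snd ℝ _ _))) x := by
  have hα1 : 0 < α + 1 := by linarith
  set p : ℝ := 2 * (α + 1) with hp
  set N : E m k → ℝ := fun y => ‖y.1‖ ^ p + 4 * (α + 1) ^ 2 * ‖y.2‖ ^ 2
  set L : E m k →L[ℝ] ℝ := ‖x.1‖ ^ (2 * α) • (innerSL ℝ x.1).comp (ContinuousLinearMap.fst ℝ _ _) +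
    (4 * (α + 1)) • (innerSL ℝ x.2).comp (ContinuousLinearMap.snd ℝ _ _)
  have hρN : rho m k α = (· ^ p⁻¹) ∘ N := by
    funext y; rw [rho, one_div]; rfl
  have hNx : N x = rho m k α x ^ p := (rho_rpow hα1 x).symm
  have hρ := rho_pos hα1 hx
  -- `-1/2 < α` makes the exponent `p` exceed `1`, so `|z| ^ p` is differentiable at `z = 0`.
  have hN : HasFDerivAt N (p • L) x := by
    refine (((hasFDerivAt_norm_rpow x.1 (by linarith)).comp x hasFDerivAt_fst).add
      (hasFDerivAt_snd.norm_sq.const_mul _)).congr_fderiv ?_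
    rw [show p - 2 = 2 * α by ring]
    simp only [L, hp, ContinuousLinearMap.smul_comp]
    module
  have hNx0 : N x ≠ 0 := hNx ▸ (Real.rpow_pos_of_pos hρ p).ne'
  have hρ' : HasFDerivAt (rho m k α) _ x :=
    hρN ▸ (Real.hasDerivAt_rpow_const (Or.inl hNx0)).comp_hasFDerivAt x hN
  refine hρ'.congr_fderiv ?_
  have hexp : N x ^ (p⁻¹ - 1) = (rho m k α x ^ (2 * α + 1))⁻¹ := by
    rw [hNx, ← Real.rpow_mul hρ.le, ← Real.rpow_neg hρ.le]
    congr 1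
    rw [hp]
    field_simp
    ring
  have hp0 : p ≠ 0 := by positivity
  rw [smul_smul, hexp]
  congr 1
  field_simp

lemma fderiv_rho_ez (hα : -1 / 2 < α) {x : E m k} (hx : x ≠ 0) (i : Fin m) :
    fderiv ℝ (rho m k α) x (ez m k i) = ‖x.1‖ ^ (2 * α) * x.1 i / rho m k α x ^ (2 * α + 1) := by
  simp [(hasFDerivAt_rho hα hx).fderiv, ez, EuclideanSpace.inner_single_right, div_eq_inv_mul]

lemma fderiv_rho_es (hα : -1 / 2 < α) {x : E m k} (hx : x ≠ 0) (j : Fin k) :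
    fderiv ℝ (rho m k α) x (es m k j) = 4 * (α + 1) * x.2 j / rho m k α x ^ (2 * α + 1) := by
  simp [(hasFDerivAt_rho hα hx).fderiv, es, EuclideanSpace.inner_single_right, div_eq_inv_mul]

lemma ContinuousLinearMap.apply_eq_sum_ez_add_sum_es {F : Type*} [NormedAddCommGroup F]
    [NormedSpace ℝ F] (L : E m k →L[ℝ] F) (v : E m k) :
    L v = ∑ i, v.1 i • L (ez m k i) + ∑ j, v.2 j • L (es m k j) := by
  have hv : v = ∑ i, v.1 i • ez m k i + ∑ j, v.2 j • es m k j := by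
    ext1
    · simpa [ez, es, Prod.fst_sum] using ((EuclideanSpace.basisFun (Fin m) ℝ).sum_repr v.1).symm
    · simpa [ez, es, Prod.snd_sum] using ((EuclideanSpace.basisFun (Fin k) ℝ).sum_repr v.2).symm
  conv_lhs => rw [hv]
  simp only [map_add, map_sum, map_smul]

lemma Zop_eq_sum (u : E m k → ℝ) (x : E m k) :
    Zop m k α u x = ∑ i, x.1 i * fderiv ℝ u x (ez m k i) +
      (α + 1) * ∑ j, x.2 j * fderiv ℝ u x (es m k j) := by
  rw [Zop, ContinuousLinearMap.apply_eq_sum_ez_add_sum_es, Finset.mul_sum]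
  simp only [smul_eq_mul, PiLp.smul_apply, mul_assoc]

end

theorem alphaInner_rho_general (m k : ℕ) (α : ℝ) (hα : 0 < α)
    (u : E m k → ℝ) (x : E m k) (hx : x ≠ 0) :
    alphaInner m k α u (rho m k α) x = Zop m k α u x / rho m k α x * psi m k α x := by
  have hα' : -1 / 2 < α := by linarith
  have hρ : 0 < rho m k α x := rho_pos (by linarith) hx
  have hinner : alphaInner m k α u (rho m k α) x =
      ‖x.1‖ ^ (2 * α) / rho m k α x ^ (2 * α + 1) * Zop m k α u x := by
    simp only [alphaInner, Zop_eq_sum, fderiv_rho_ez hα' hx, fderiv_rho_es hα' hx, mul_add,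
      Finset.mul_sum]
    congr 1 <;> refine Finset.sum_congr rfl fun _ _ => by ring
  rw [hinner, psi, Real.rpow_add hρ, Real.rpow_one]
  field_simp

theorem alphaInner_rho (m k : ℕ) (hm : 1 ≤ m) (hk : 1 ≤ k) (α : ℝ) (hα : 0 < α)
    (u : E m k → ℝ) (hu : ContDiff ℝ 1 u) (x : E m k) (hx : x ≠ 0) :
    alphaInner m k α u (rho m k α) x = Zop m k α u x / rho m k α x * psi m k α x :=
  alphaInner_rho_general m k α hα u x hx
end

section
/- Away from the subspace {0} × ℝ^k, the function Γ_α(z,σ) = ρ_α(z,σ)^{2−Q_α} satisfies B_α Γ_α = 0, where B_α = Δ_z + (|z|^{2α}/4)Δ_σ, ρ_α(z,σ) = (|z|^{2(α+1)} + 4(α+1)²|σ|²)^{1/(2(α+1))} and Q_α = m + (α+1)k. -/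
open MeasureTheory Real

/-!
Write `Γ_α = g ^ p` with `g = ρ_α ^ (2(α+1))`, which is smooth away from `z = 0`, and
`p = (2 - Q_α) / (2(α+1))`. The operator obeys the chain rule
`B_α (φ ∘ g) = φ'(g) B_α g + φ''(g) |∇_α g|²`, and a direct computation gives `B_α g = 2(α+1)(Q_α + 2α) |z|^{2α}` and `|∇_α g|² = 4(α+1)² |z|^{2α} g`. For `φ = t ^ p`
the two terms cancel because `2(α+1)(p - 1) = -(Q_α + 2α)`.
-/

open Filter Topology

theorem fderiv_fderiv_comp_apply {F : Type*} [NormedAddCommGroup F] [NormedSpace ℝ F]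
    {g : F → ℝ} {φ φ' : ℝ → ℝ} {φ'' : ℝ} {x : F}
    (hg : ContDiffAt ℝ 2 g x) (hφ : ∀ᶠ t in 𝓝 (g x), HasDerivAt φ (φ' t) t)
    (hφ' : HasDerivAt φ' φ'' (g x)) (v : F) :
    fderiv ℝ (fun y => fderiv ℝ (fun y => φ (g y)) y v) x v =
      φ'' * fderiv ℝ g x v ^ 2 + φ' (g x) * fderiv ℝ (fun y => fderiv ℝ g y v) x v := by
  have hg_near : ∀ᶠ y in 𝓝 x, DifferentiableAt ℝ g y :=
    (hg.eventually (by simp)).mono fun y hy => hy.differentiableAt (by simp)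
  have hDg : DifferentiableAt ℝ (fun y => fderiv ℝ g y v) x :=
    ((hg.fderiv_right (m := 1) le_rfl).differentiableAt (by simp)).clm_apply
      (differentiableAt_const v)
  have hchain : (fun y => fderiv ℝ (fun y => φ (g y)) y v) =ᶠ[𝓝 x]
      fun y => φ' (g y) * fderiv ℝ g y v := by
    filter_upwards [hg_near, hg.continuousAt.eventually hφ] with y hgy hφy
    have h : HasFDerivAt (fun y => φ (g y)) (φ' (g y) • fderiv ℝ g y) y :=
      hφy.comp_hasFDerivAt y hgy.hasFDerivAt
    simp [h.fderiv]
  have h : HasFDerivAt (fun y => φ' (g y) * fderiv ℝ g y v)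
      (φ' (g x) • fderiv ℝ (fun y => fderiv ℝ g y v) x +
        fderiv ℝ g x v • (φ'' • fderiv ℝ g x)) x :=
    (hφ'.comp_hasFDerivAt x (hg.differentiableAt (by simp)).hasFDerivAt).mul hDg.hasFDerivAt
  rw [hchain.fderiv_eq, h.fderiv]
  simp
  ring

theorem hasFDerivAt_norm_rpow_of_ne_zero {F : Type*} [NormedAddCommGroup F]
    [InnerProductSpace ℝ F] {z : F} (hz : z ≠ 0) (r : ℝ) :
    HasFDerivAt (fun z : F => ‖z‖ ^ r) ((r * ‖z‖ ^ (r - 2)) • innerSL ℝ z) z := by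
  have hsq : (fun z : F => ‖z‖ ^ r) = fun z => (‖z‖ ^ 2) ^ (r / 2) := by
    funext z
    rw [← Real.rpow_natCast_mul (norm_nonneg z)]
    ring_nf
  have hpos : 0 < ‖z‖ := norm_pos_iff.mpr hz
  rw [hsq]
  convert (hasStrictFDerivAt_norm_sq z).hasFDerivAt.rpow_const (p := r / 2)
    (Or.inl (by positivity)) using 1
  have hexp : (‖z‖ ^ 2) ^ (r / 2 - 1) = ‖z‖ ^ (r - 2) := by
    rw [← Real.rpow_natCast_mul hpos.le]
    ring_nf
  ext w
  simp [hexp]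
  ring

theorem Bop_comp {m k : ℕ} (α : ℝ) {g : E m k → ℝ} {φ φ' : ℝ → ℝ} {φ'' : ℝ} {x : E m k}
    (hg : ContDiffAt ℝ 2 g x) (hφ : ∀ᶠ t in 𝓝 (g x), HasDerivAt φ (φ' t) t)
    (hφ' : HasDerivAt φ' φ'' (g x)) :
    Bop m k α (fun y => φ (g y)) x = φ' (g x) * Bop m k α g x + φ'' * alphaGradSq m k α g x := by
  simp only [Bop, lapZ, lapS, alphaGradSq, zGradSq, sGradSq, fderiv_fderiv_comp_apply hg hφ hφ',
    Finset.sum_add_distrib, ← Finset.mul_sum]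
  ring

/-- `ρ_α ^ (2(α+1))`. -/
noncomputable def rhoPow (m k : ℕ) (α : ℝ) (x : E m k) : ℝ :=
  ‖x.1‖ ^ (2 * (α + 1)) + 4 * (α + 1) ^ 2 * ‖x.2‖ ^ 2

section rhoPow

variable {m k : ℕ} (α : ℝ) {x : E m k}

theorem rhoPow_pos (hx : x.1 ≠ 0) : 0 < rhoPow m k α x := by
  have := norm_pos_iff.mpr hx
  unfold rhoPow
  positivity

theorem contDiffAt_rhoPow (hx : x.1 ≠ 0) : ContDiffAt ℝ 2 (rhoPow m k α) x := by
  have hz : ContDiffAt ℝ 2 (fun y : E m k => ‖y.1‖) x :=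
    (contDiffAt_norm ℝ hx).comp x contDiffAt_fst
  exact (hz.rpow_const_of_ne (norm_ne_zero_iff.mpr hx)).add
    (contDiffAt_const.mul (contDiffAt_snd.norm_sq ℝ))

theorem hasFDerivAt_rhoPow (hx : x.1 ≠ 0) :
    HasFDerivAt (rhoPow m k α)
      ((2 * (α + 1) * ‖x.1‖ ^ (2 * α)) • (innerSL ℝ x.1).comp (.fst ℝ _ _) +
        (8 * (α + 1) ^ 2) • (innerSL ℝ x.2).comp (.snd ℝ _ _)) x := by
  have hz := (hasFDerivAt_norm_rpow_of_ne_zero hx (2 * (α + 1))).comp x (hasFDerivAt_fst (p := x))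
  have hs := (hasFDerivAt_snd (p := x)).norm_sq.const_mul (4 * (α + 1) ^ 2)
  have h : HasFDerivAt
      (fun y : E m k => ‖y.1‖ ^ (2 * (α + 1)) + 4 * (α + 1) ^ 2 * ‖y.2‖ ^ 2) _ x := hz.add hs
  have hexp : 2 * (α + 1) - 2 = 2 * α := by ring
  refine h.congr_fderiv (ContinuousLinearMap.ext fun v => ?_)
  simp [hexp]
  ring

theorem fderiv_rhoPow_apply (hx : x.1 ≠ 0) (v : E m k) :
    fderiv ℝ (rhoPow m k α) x v =
      2 * (α + 1) * ‖x.1‖ ^ (2 * α) * inner ℝ x.1 v.1 + 8 * (α + 1) ^ 2 * inner ℝ x.2 v.2 := by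
  simp [(hasFDerivAt_rhoPow α hx).fderiv]

theorem fderiv_fderiv_rhoPow_apply (hx : x.1 ≠ 0) (v : E m k) :
    fderiv ℝ (fun y => fderiv ℝ (rhoPow m k α) y v) x v =
      2 * (α + 1) * (2 * α * ‖x.1‖ ^ (2 * α - 2) * inner ℝ x.1 v.1 ^ 2 +
        ‖x.1‖ ^ (2 * α) * ‖v.1‖ ^ 2) + 8 * (α + 1) ^ 2 * ‖v.2‖ ^ 2 := by
  have hnear : ∀ᶠ y : E m k in 𝓝 x, y.1 ≠ 0 := continuousAt_fst.eventually_ne hx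
  have hev : (fun y => fderiv ℝ (rhoPow m k α) y v) =ᶠ[𝓝 x] fun y =>
      2 * (α + 1) * ‖y.1‖ ^ (2 * α) * inner ℝ y.1 v.1 + 8 * (α + 1) ^ 2 * inner ℝ y.2 v.2 := by
    filter_upwards [hnear] with y hy using fderiv_rhoPow_apply α hy v
  have hpow := (hasFDerivAt_norm_rpow_of_ne_zero hx (2 * α)).comp x (hasFDerivAt_fst (p := x))
  have h : HasFDerivAt (fun y : E m k =>
      2 * (α + 1) * ‖y.1‖ ^ (2 * α) * inner ℝ y.1 v.1 + 8 * (α + 1) ^ 2 * inner ℝ y.2 v.2) _ x :=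
    ((hpow.const_mul (2 * (α + 1))).mul (hasFDerivAt_fst.inner ℝ (hasFDerivAt_const v.1 x))).add
      ((hasFDerivAt_snd.inner ℝ (hasFDerivAt_const v.2 x)).const_mul (8 * (α + 1) ^ 2))
  rw [hev.fderiv_eq, h.fderiv]
  simp
  ring

theorem Bop_rhoPow (hx : x.1 ≠ 0) :
    Bop m k α (rhoPow m k α) x =
      2 * (α + 1) * ((m : ℝ) + (α + 1) * k + 2 * α) * ‖x.1‖ ^ (2 * α) := by
  simp only [Bop, lapZ, lapS, fderiv_fderiv_rhoPow_apply α hx]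
  have hN : ‖x.1‖ ^ (2 * α - 2) * ‖x.1‖ ^ 2 = ‖x.1‖ ^ (2 * α) := by
    rw [← Real.rpow_add_natCast (norm_ne_zero_iff.mpr hx)]
    norm_num
  simp [ez, es, EuclideanSpace.inner_single_right, mul_add, Finset.sum_add_distrib,
    ← Finset.mul_sum, ← EuclideanSpace.real_norm_sq_eq]
  linear_combination (2 * α + 2) * (2 * α) * hN

theorem alphaGradSq_rhoPow (hx : x.1 ≠ 0) :
    alphaGradSq m k α (rhoPow m k α) x = 4 * (α + 1) ^ 2 * ‖x.1‖ ^ (2 * α) * rhoPow m k α x := by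
  simp only [alphaGradSq, zGradSq, sGradSq, fderiv_rhoPow_apply α hx]
  simp [ez, es, EuclideanSpace.inner_single_right, mul_pow, ← Finset.mul_sum,
    ← EuclideanSpace.real_norm_sq_eq]
  have hN : ‖x.1‖ ^ (2 * α) * ‖x.1‖ ^ 2 = ‖x.1‖ ^ (2 * (α + 1)) := by
    rw [← Real.rpow_add_natCast (norm_ne_zero_iff.mpr hx)]
    ring_nf
  rw [rhoPow, ← hN]
  ring

end rhoPow

theorem fundamental_solution_harmonic_general (m k : ℕ)
    (α : ℝ) (hα : 0 < α)
    (x : E m k) (hx : x.1 ≠ 0) :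
    Bop m k α (fun y => rho m k α y ^ (2 - ((m : ℝ) + (α + 1) * k))) x = 0 := by
  set Q : ℝ := (m : ℝ) + (α + 1) * k
  set p : ℝ := 1 / (2 * (α + 1)) * (2 - Q) with hp
  set g := rhoPow m k α x
  have hg : 0 < g := rhoPow_pos α hx
  have hΓ : (fun y => rho m k α y ^ (2 - Q)) = fun y => rhoPow m k α y ^ p := by
    funext y
    rw [rho, ← Real.rpow_mul (by positivity)]
    rfl
  have hφ : ∀ᶠ t in 𝓝 g, HasDerivAt (· ^ p) (p * t ^ (p - 1)) t := by
    filter_upwards [lt_mem_nhds hg] with t ht using Real.hasDerivAt_rpow_const (Or.inl ht.ne')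
  have hφ' : HasDerivAt (fun t => p * t ^ (p - 1)) (p * ((p - 1) * g ^ (p - 1 - 1))) g :=
    (Real.hasDerivAt_rpow_const (Or.inl hg.ne')).const_mul p
  have hpow : g ^ (p - 1 - 1) * g = g ^ (p - 1) := by
    rw [Real.rpow_sub_one hg.ne' (p - 1)]
    field_simp
  have hα1 : α + 1 ≠ 0 := by linarith
  have hexp : 2 * (α + 1) * p = 2 - Q := by
    rw [hp]
    field_simp
  rw [hΓ, Bop_comp α (contDiffAt_rhoPow α hx) hφ hφ', Bop_rhoPow α hx, alphaGradSq_rhoPow α hx]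
  linear_combination (2 * α + 2) * p * ‖x.1‖ ^ (2 * α) *
    (2 * (α + 1) * (p - 1) * hpow + g ^ (p - 1) * hexp)

theorem fundamental_solution_harmonic (m k : ℕ) (hm : 1 ≤ m) (hk : 1 ≤ k)
    (α : ℝ) (hα : 0 < α) (hQ : 2 < (m : ℝ) + (α + 1) * k)
    (x : E m k) (hx : x.1 ≠ 0) :
    Bop m k α (fun y => rho m k α y ^ (2 - ((m : ℝ) + (α + 1) * k))) x = 0 :=
  fundamental_solution_harmonic_general m k α hα x hx
end
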